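/- Let ν > 0 and B̂₀ ∈ ℝ³ a unit vector, D(k) = |k|²(Ω̂·k)² + ((B̂₀·k)² + ν|k|⁴)². For any l ∈ ℤ∖{0}, there is a choice of sign s ∈ {+1,-1} such that for k = (s, 0, l), we have (B̂₀·k)² + ν|k|⁴ < D(k)/(ν + (B̂₀)₁²). In particular the choice can be made so that (B̂₀)₁² ≤ (B̂₀·k)². -/

import Mathlib

open scoped RealInnerProductSpace

/-! Choosing the sign of `k₁` so that `k₁ B₁` and `k₃ B₃` have the same sign makes the cross term
of `(B·k)²` nonnegative, hence `B₁² ≤ (B·k)²`. Since `|k|² = 1 + l² ≥ 2`, this gives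
`ν + B₁² < (B·k)² + ν|k|⁴ =: y`, and then `y (ν + B₁²) < y² ≤ D(k)`. -/

lemma exists_sign_sq_le_sq_mul_add {R : Type*} [CommRing R] [LinearOrder R]
    [IsStrictOrderedRing R] (a c : R) :
    ∃ s : ℤ, (s = 1 ∨ s = -1) ∧ a ^ 2 ≤ (a * s + c) ^ 2 := by
  rcases le_total 0 (a * c) with hac | hac
  · exact ⟨1, .inl rfl, by push_cast; nlinarith [sq_nonneg c]⟩
  · exact ⟨-1, .inr rfl, by push_cast; nlinarith [sq_nonneg c]⟩

lemma lt_add_sq_div {K : Type*} [Field K] [LinearOrder K] [IsStrictOrderedRing K]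
    {d y q : K} (hd : 0 < d) (hdy : d < y) (hq : 0 ≤ q) :
    y < (q + y ^ 2) / d := by
  rw [lt_div_iff₀ hd]
  nlinarith [mul_lt_mul_of_pos_left hdy (hd.trans hdy)]

lemma EuclideanSpace.inner_eq_fin_three (x y : EuclideanSpace ℝ (Fin 3)) :
    ⟪x, y⟫ = x 0 * y 0 + x 1 * y 1 + x 2 * y 2 := by
  simp [PiLp.inner_apply, Fin.sum_univ_three, mul_comm]

lemma EuclideanSpace.norm_sq_eq_fin_three (x : EuclideanSpace ℝ (Fin 3)) :
    ‖x‖ ^ 2 = x 0 ^ 2 + x 1 ^ 2 + x 2 ^ 2 := by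
  simp [EuclideanSpace.real_norm_sq_eq, Fin.sum_univ_three]

theorem stmt4_general (ν : ℝ) (hν : 0 < ν) (B Ωh : EuclideanSpace ℝ (Fin 3))
    (l : ℤ) (hl : l ≠ 0) :
    ∃ s : ℤ, (s = 1 ∨ s = -1) ∧
      ∀ kR : EuclideanSpace ℝ (Fin 3),
        (kR 0 = (s : ℝ) ∧ kR 1 = 0 ∧ kR 2 = (l : ℝ)) →
          (B 0) ^ 2 ≤ ⟪B, kR⟫ ^ 2 ∧
            ⟪B, kR⟫ ^ 2 + ν * ‖kR‖ ^ 4 <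
              (‖kR‖ ^ 2 * ⟪Ωh, kR⟫ ^ 2 + (⟪B, kR⟫ ^ 2 + ν * ‖kR‖ ^ 4) ^ 2) /
                (ν + (B 0) ^ 2) := by
  obtain ⟨s, hs, hsq⟩ := exists_sign_sq_le_sq_mul_add (B 0) (B 2 * l)
  refine ⟨s, hs, fun k ⟨h0, h1, h2⟩ => ?_⟩
  have hinner : ⟪B, k⟫ = B 0 * s + B 2 * l := by
    rw [EuclideanSpace.inner_eq_fin_three, h0, h1, h2]; ring
  have hs2 : (s : ℝ) ^ 2 = 1 := by rcases hs with rfl | rfl <;> norm_num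
  have hnorm : ‖k‖ ^ 2 = 1 + (l : ℝ) ^ 2 := by
    rw [EuclideanSpace.norm_sq_eq_fin_three, h0, h1, h2, hs2]; ring
  have hl2 : (1 : ℝ) ≤ (l : ℝ) ^ 2 := by
    exact_mod_cast Int.one_le_abs hl |>.trans (Int.le_self_sq _) |>.trans_eq (sq_abs l)
  have hB0 : B 0 ^ 2 ≤ ⟪B, k⟫ ^ 2 := hinner ▸ hsq
  refine ⟨hB0, lt_add_sq_div (by positivity) ?_ (by positivity)⟩
  have hk4 : 4 ≤ ‖k‖ ^ 4 := by
    rw [show ‖k‖ ^ 4 = (‖k‖ ^ 2) ^ 2 by ring, hnorm]; nlinarith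
  linarith [mul_le_mul_of_nonneg_left hk4 hν.le]

/-- For `k = (±1, 0, l)` with a suitable choice of sign,
`(B̂₀·k)² + ν|k|⁴ < D(k)/(ν + (B̂₀)₁²)`, with the choice made so `(B̂₀)₁² ≤ (B̂₀·k)²`. -/
theorem stmt4 (ν : ℝ) (hν : 0 < ν) (B Ωh : EuclideanSpace ℝ (Fin 3))
    (hB : ‖B‖ = 1) (hΩ : ‖Ωh‖ = 1) (hΩ1 : Ωh 0 = 0) (l : ℤ) (hl : l ≠ 0) :
    ∃ s : ℤ, (s = 1 ∨ s = -1) ∧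
      ∀ kR : EuclideanSpace ℝ (Fin 3),
        (kR 0 = (s : ℝ) ∧ kR 1 = 0 ∧ kR 2 = (l : ℝ)) →
          (B 0) ^ 2 ≤ ⟪B, kR⟫ ^ 2 ∧
            ⟪B, kR⟫ ^ 2 + ν * ‖kR‖ ^ 4 <
              (‖kR‖ ^ 2 * ⟪Ωh, kR⟫ ^ 2 + (⟪B, kR⟫ ^ 2 + ν * ‖kR‖ ^ 4) ^ 2) /
                (ν + (B 0) ^ 2) :=
  stmt4_general ν hν B Ωh l hl
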